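/- arXiv:1909.07525 — 2 statements merged into one kernel-verified Lean document; each statement's English description precedes it below -/
import Mathlib

section
/- Let (μ_t)_{t∈[0,T]} be a family of finite nonnegative Radon measures on X, weakly continuous in t, with supp μ_t ⊂ 𝕋^d × B_{P_T}(0) × [θ_m^0, θ_M^0] for all t ∈ [0,T], where P_T > 0 and 0 < θ_m^0 ≤ θ_M^0. Let (x_μ(t), v_μ(t), θ_μ(t)) be a C^1 solution on [0,T] of the characteristic system dx_μ/dt = v_μ, dv_μ/dt = F[μ_t](x_μ, v_μ, θ_μ), dθ_μ/dt = G[μ_t](x_μ, θ_μ), with θ_μ(t) > 0 and initial temperature θ_μ(0) ∈ [θ_m^0, θ_M^0]. Then the temperature component satisfies θ_μ(t) ≥ θ_m^0 for all t ∈ [0,T]. -/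
open MeasureTheory Set
open scoped Topology NNReal

noncomputable section

instance factZeroLtOne' : Fact ((0:ℝ) < 1) := ⟨zero_lt_one⟩

/-- The `d`-dimensional torus `𝕋^d = ℝ^d / ℤ^d`. -/
abbrev Td (d : ℕ) := Fin d → AddCircle (1 : ℝ)

/-- The velocity space `ℝ^d` with the Euclidean norm. -/
abbrev Vd (d : ℕ) := EuclideanSpace ℝ (Fin d)

/-- The phase space `X = 𝕋^d × ℝ^d × ℝ` (the temperature variable `θ` is modelled as a real
number; positivity of `θ` is imposed through support conditions). -/
abbrev Xd (d : ℕ) := Td d × Vd d × ℝ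

/-- The canonical projection `ℝ^d → 𝕋^d`. -/
def projT (d : ℕ) (y : Vd d) : Td d := fun i => (y i : AddCircle (1 : ℝ))

variable {d : ℕ}

/-- The alignment force `F[μ](x,v,θ) = ∫ φ(x_* - x) (v_*/θ_* - v/θ) dμ(z_*)`. -/
def Fker (φ : Td d → ℝ) (μ : Measure (Xd d)) (x : Td d) (v : Vd d) (θ : ℝ) : Vd d :=
  ∫ z, φ (z.1 - x) • ((z.2.2)⁻¹ • z.2.1 - θ⁻¹ • v) ∂μ

/-- The temperature interaction `G[μ](x,θ) = ∫ ζ(x_* - x) (1/θ - 1/θ_*) dμ(z_*)`. -/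
def Gker (ζ : Td d → ℝ) (μ : Measure (Xd d)) (x : Td d) (θ : ℝ) : ℝ :=
  ∫ z, ζ (z.1 - x) * (θ⁻¹ - (z.2.2)⁻¹) ∂μ

/-- The bounded Lipschitz distance between two measures on `X`. -/
def blDist (μ ν : Measure (Xd d)) : ℝ :=
  sSup {r | ∃ g : Xd d → ℝ, (∀ z, |g z| ≤ 1) ∧ LipschitzWith 1 g ∧
    r = |(∫ z, g z ∂μ) - ∫ z, g z ∂ν|}

/-- `supp μ ⊆ 𝕋^d × B_P(0) × [θm, θM]`. -/
def SuppIn (μ : Measure (Xd d)) (P θm θM : ℝ) : Prop :=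
  μ {z : Xd d | ¬(‖z.2.1‖ ≤ P ∧ z.2.2 ∈ Icc θm θM)} = 0

/-- `(μ t)_{t ∈ [0,T]}` is a measure-valued solution of the kinetic thermomechanical
Cucker–Smale equation: each `μ t` is a finite measure, `t ↦ ∫ g dμ_t` is continuous for
`g ∈ C_0(X)`, and the weak formulation holds for all test functions `g ∈ C_0^1([0,T) × X)`
(C¹-regularity on the torus is expressed through the lift along `projT`, and the transport
term `∂_s g + v·∇_x g + F[μ_s]·∇_v g + G[μ_s] ∂_θ g` is expressed as the derivative of `g`
along the characteristic direction, which agrees with it by the chain rule). -/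
def IsMVSol (φ ζ : Td d → ℝ) (T : ℝ) (μ : ℝ → Measure (Xd d)) : Prop :=
  (∀ t ∈ Icc (0:ℝ) T, IsFiniteMeasure (μ t)) ∧
  (∀ g : Xd d → ℝ, Continuous g → HasCompactSupport g →
     (∀ z : Xd d, z.2.2 ≤ 0 → g z = 0) →
     ContinuousOn (fun t => ∫ z, g z ∂(μ t)) (Icc 0 T)) ∧
  (∀ g : ℝ → Xd d → ℝ,
     ContDiff ℝ 1 (fun p : ℝ × Vd d × Vd d × ℝ =>
        g p.1 (projT d p.2.1, p.2.2.1, p.2.2.2)) →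
     HasCompactSupport (Function.uncurry g) →
     (∀ s, T ≤ s → ∀ z, g s z = 0) →
     (∀ s, ∀ z : Xd d, z.2.2 ≤ 0 → g s z = 0) →
     ∀ t ∈ Icc (0:ℝ) T,
       (∫ z, g t z ∂(μ t)) - ∫ z, g 0 z ∂(μ 0) =
       ∫ s in (0:ℝ)..t, ∫ z, deriv (fun a : ℝ =>
           g (s + a) (z.1 + projT d (a • z.2.1),
             z.2.1 + a • Fker φ (μ s) z.1 z.2.1 z.2.2,
             z.2.2 + a • Gker ζ (μ s) z.1 z.2.2)) 0 ∂(μ s))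

/-- `(projT d ∘ y, v, θc)` is a characteristic curve of the kinetic TCS equation associated
with the family `(μ t)` on `[0,T]`: it solves `ẋ = v`, `v̇ = F[μ_t](x,v,θ)`,
`θ̇ = G[μ_t](x,θ)`. The torus component is represented through its lift `y : ℝ → ℝ^d`. -/
def IsCharOn {d : ℕ} (φ ζ : Td d → ℝ) (μ : ℝ → Measure (Xd d)) (T : ℝ)
    (y v : ℝ → Vd d) (θc : ℝ → ℝ) : Prop :=
  ∀ t ∈ Icc (0:ℝ) T,
    HasDerivAt y (v t) t ∧
    HasDerivAt v (Fker φ (μ t) (projT d (y t)) (v t) (θc t)) t ∧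
    HasDerivAt θc (Gker ζ (μ t) (projT d (y t)) (θc t)) t

/-- `z` belongs to the support of the measure `μ`. -/
def memSupp {d : ℕ} (μ : Measure (Xd d)) (z : Xd d) : Prop :=
  ∀ U : Set (Xd d), IsOpen U → z ∈ U → 0 < μ U

/-! The temperature interaction `G[μ](x, θ)` is nonnegative as soon as `θ` lies below every
temperature charged by `μ`, so the level `θ_m^0` is a lower barrier for `θ_μ`: while `θ_μ < θ_m^0`
the temperature cannot decrease. -/

theorem le_image_of_deriv_right_nonneg_below {f f' : ℝ → ℝ} {a b m : ℝ}
    (hf : ContinuousOn f (Icc a b)) (hf' : ∀ x ∈ Ico a b, HasDerivWithinAt f (f' x) (Ici x) x)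
    (ha : m ≤ f a) (hbelow : ∀ x ∈ Ico a b, f x < m → 0 ≤ f' x) :
    ∀ ⦃x⦄, x ∈ Icc a b → m ≤ f x := by
  intro x hx
  have hpos : 0 < x - a + 1 := by linarith [hx.1]
  -- Compare `-f` with the barriers `ε (x - a + 1) - m`, which `-f` can only touch where `f < m`.
  have hbarrier : ∀ ε > 0, m ≤ f x + ε * (x - a + 1) := by
    intro ε hε
    have := image_le_of_deriv_right_lt_deriv_boundary (B := fun x => ε * (x - a + 1) - m)
      (B' := fun _ => ε) hf.neg (fun x hx => (hf' x hx).neg)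
      (by simp only [Pi.neg_apply]; linarith)
      (fun x => ((hasDerivAt_id x).sub_const a |>.add_const 1 |>.const_mul ε
        |>.sub_const m).congr_deriv (mul_one ε))
      (fun x hx htouch => by
        simp only [Pi.neg_apply] at htouch
        have := hbelow x hx (by nlinarith [hx.1])
        linarith) hx
    simp only [Pi.neg_apply] at this
    linarith
  refine le_of_forall_pos_le_add fun ε hε => ?_
  have := hbarrier (ε / (x - a + 1)) (div_pos hε hpos)
  rwa [div_mul_cancel₀ ε hpos.ne'] at this

theorem SuppIn.ae_le_temperature {d : ℕ} {μ : Measure (Xd d)} {P θm θM : ℝ}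
    (h : SuppIn μ P θm θM) : ∀ᵐ z ∂μ, θm ≤ z.2.2 :=
  (ae_iff.2 h).mono fun _ hz => hz.2.1

theorem Gker_nonneg {d : ℕ} {ζ : Td d → ℝ} (hζ : ∀ x, 0 ≤ ζ x) {μ : Measure (Xd d)}
    (x : Td d) {θ : ℝ} (hθ : 0 < θ) (hμ : ∀ᵐ z ∂μ, θ ≤ z.2.2) : 0 ≤ Gker ζ μ x θ :=
  integral_nonneg_of_ae <| hμ.mono fun _ hz =>
    mul_nonneg (hζ _) (sub_nonneg.2 (inv_anti₀ hθ hz))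

theorem characteristic_temperature_lower_bound_general
    (d : ℕ) (φ ζ : Td d → ℝ)
    (hζ0 : ∀ x, 0 ≤ ζ x)
    (T : ℝ)
    (P θm θM : ℝ)
    (μ : ℝ → Measure (Xd d))
    (hsμ : ∀ t ∈ Icc (0:ℝ) T, SuppIn (μ t) P θm θM)
    (y v : ℝ → Vd d) (θc : ℝ → ℝ)
    (hchar : IsCharOn φ ζ μ T y v θc)
    (hθpos : ∀ t ∈ Icc (0:ℝ) T, 0 < θc t)
    (hθ0 : θc 0 ∈ Icc θm θM) :
    ∀ t ∈ Icc (0:ℝ) T, θm ≤ θc t := by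
  have hderiv := fun t ht => (hchar t ht).2.2
  refine le_image_of_deriv_right_nonneg_below
    (fun t ht => (hderiv t ht).continuousAt.continuousWithinAt)
    (fun t ht => (hderiv t (Ico_subset_Icc_self ht)).hasDerivWithinAt) hθ0.1 ?_
  intro t ht hlt
  have ht' := Ico_subset_Icc_self ht
  exact Gker_nonneg hζ0 _ (hθpos t ht') <|
    (hsμ t ht').ae_le_temperature.mono fun _ hz => hlt.le.trans hz

/-- lower bound on the temperature along characteristics: if the family
`(μ_t)` of finite measures is weakly continuous in time and uniformly compactly supported
with temperature support in `[θ_m^0, θ_M^0]`, then any characteristic curve with positive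
temperature and initial temperature in `[θ_m^0, θ_M^0]` satisfies `θ_μ(t) ≥ θ_m^0` on
`[0,T]`. -/
theorem characteristic_temperature_lower_bound
    (d : ℕ) (φ ζ : Td d → ℝ)
    (hφ0 : ∀ x, 0 ≤ φ x) (hζ0 : ∀ x, 0 ≤ ζ x)
    (hφL : ∃ K : ℝ≥0, LipschitzWith K φ) (hζL : ∃ K : ℝ≥0, LipschitzWith K ζ)
    (T : ℝ) (hT : 0 < T)
    (P θm θM : ℝ) (hP : 0 < P) (hθm : 0 < θm) (hθmM : θm ≤ θM)
    (μ : ℝ → Measure (Xd d))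
    (hfin : ∀ t ∈ Icc (0:ℝ) T, IsFiniteMeasure (μ t))
    (hwc : ∀ g : Xd d → ℝ, Continuous g → HasCompactSupport g →
      (∀ z : Xd d, z.2.2 ≤ 0 → g z = 0) →
      ContinuousOn (fun t => ∫ z, g z ∂(μ t)) (Icc 0 T))
    (hsμ : ∀ t ∈ Icc (0:ℝ) T, SuppIn (μ t) P θm θM)
    (y v : ℝ → Vd d) (θc : ℝ → ℝ)
    (hchar : IsCharOn φ ζ μ T y v θc)
    (hθpos : ∀ t ∈ Icc (0:ℝ) T, 0 < θc t)
    (hθ0 : θc 0 ∈ Icc θm θM) :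
    ∀ t ∈ Icc (0:ℝ) T, θm ≤ θc t :=
  characteristic_temperature_lower_bound_general d φ ζ hζ0 T P θm θM μ hsμ y v θc hchar hθpos hθ0
end
end

section
/- Let μ and ν be finite nonnegative Radon measures on X whose supports are contained in 𝕋^d × B_{P_T}(0) × [θ_m^0, θ_M^0], where P_T > 0 and 0 < θ_m^0 ≤ θ_M^0. Define a(x,μ) = ∫_X φ(x_*−x)(v_*/θ_*) dμ(z_*). Then for every x ∈ 𝕋^d, |a(x,μ) − a(x,ν)| ≤ max{ ‖φ‖_{L^∞} P_T/θ_m^0 , ‖φ‖_{Lip} P_T/θ_m^0 + ‖φ‖_{L^∞}/θ_m^0 + ‖φ‖_{L^∞} P_T/(θ_m^0)^2 } · d(μ,ν), where ‖φ‖_{Lip} denotes the Lipschitz constant of φ. -/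
open MeasureTheory Set
open scoped Topology NNReal

noncomputable section

variable {d : ℕ}

/-- `a(x,μ) = ∫ φ(x_* - x) (v_*/θ_*) dμ(z_*)`. -/
def aker {d : ℕ} (φ : Td d → ℝ) (μ : Measure (Xd d)) (x : Td d) : Vd d :=
  ∫ z, φ (z.1 - x) • ((z.2.2)⁻¹ • z.2.1) ∂μ

/-- `b(x,μ) = ∫ ζ(x_* - x) (1/θ_*) dμ(z_*)`. -/
def bker {d : ℕ} (ζ : Td d → ℝ) (μ : Measure (Xd d)) (x : Td d) : ℝ :=
  ∫ z, ζ (z.1 - x) * (z.2.2)⁻¹ ∂μ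

/-- `ρ_φ(x,μ) = ∫ φ(x_* - x) dμ(z_*)`. -/
def rker {d : ℕ} (φ : Td d → ℝ) (μ : Measure (Xd d)) (x : Td d) : ℝ :=
  ∫ z, φ (z.1 - x) ∂μ

/-! Let `u` be the direction of `a(x,μ) - a(x,ν)`. Then `‖a(x,μ) - a(x,ν)‖ = ∫ f dμ - ∫ f dν`
for `f(z_*) = φ(x_* - x) ⟪v_*, u⟫ / θ_*`. Clamping `θ_*` to `[θm, θM]` and `⟪v_*, u⟫` to `[-P, P]`
does not change `f` on the supports of `μ` and `ν`, and makes it bounded by `‖φ‖_∞ P/θm` and, by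
the product rule, Lipschitz with constant `‖φ‖_Lip P/θm + ‖φ‖_∞/θm + ‖φ‖_∞ P/θm²`. Divided by the
larger of the two constants it is admissible in the definition of the bounded Lipschitz
distance. -/

open scoped InnerProductSpace

def IsBoundedLipschitz {α : Type*} [PseudoMetricSpace α] (f : α → ℝ) (M L : ℝ) : Prop :=
  (∀ z, |f z| ≤ M) ∧ ∀ z w, dist (f z) (f w) ≤ L * dist z w

namespace IsBoundedLipschitz

variable {α β : Type*} [PseudoMetricSpace α] [PseudoMetricSpace β] {f g : α → ℝ} {M L M' L' : ℝ}

lemma mono (hf : IsBoundedLipschitz f M L) (hM : M ≤ M') (hL : L ≤ L') :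
    IsBoundedLipschitz f M' L' :=
  ⟨fun z => (hf.1 z).trans hM,
    fun z w => (hf.2 z w).trans (mul_le_mul_of_nonneg_right hL dist_nonneg)⟩

lemma comp (hf : IsBoundedLipschitz f M L) (hL : 0 ≤ L) {g : β → α} (hg : LipschitzWith 1 g) :
    IsBoundedLipschitz (f ∘ g) M L :=
  ⟨fun z => hf.1 (g z), fun z w => (hf.2 (g z) (g w)).trans <|
    mul_le_mul_of_nonneg_left (by simpa using hg.dist_le_mul z w) hL⟩

lemma const_mul (hf : IsBoundedLipschitz f M L) {c : ℝ} (hc : 0 ≤ c) :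
    IsBoundedLipschitz (fun z => c * f z) (c * M) (c * L) := by
  refine ⟨fun z => ?_, fun z w => ?_⟩
  · rw [abs_mul, abs_of_nonneg hc]
    exact mul_le_mul_of_nonneg_left (hf.1 z) hc
  · rw [Real.dist_eq, ← mul_sub, abs_mul, abs_of_nonneg hc, mul_assoc, ← Real.dist_eq]
    exact mul_le_mul_of_nonneg_left (hf.2 z w) hc

lemma mul (hf : IsBoundedLipschitz f M L) (hg : IsBoundedLipschitz g M' L') :
    IsBoundedLipschitz (f * g) (M * M') (L * M' + M * L') := by
  refine ⟨fun z => ?_, fun z w => ?_⟩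
  · rw [Pi.mul_apply, abs_mul]
    exact mul_le_mul (hf.1 z) (hg.1 z) (abs_nonneg _) ((abs_nonneg _).trans (hf.1 z))
  · have hsplit : f z * g z - f w * g w = (f z - f w) * g z + f w * (g z - g w) := by ring
    calc dist ((f * g) z) ((f * g) w) ≤ dist (f z) (f w) * |g z| + |f w| * dist (g z) (g w) := by
          simp only [Pi.mul_apply, Real.dist_eq, hsplit, ← abs_mul]
          exact abs_add_le _ _
      _ ≤ L * dist z w * M' + M * (L' * dist z w) :=
          add_le_add (mul_le_mul (hf.2 z w) (hg.1 z) (abs_nonneg _) (dist_nonneg.trans (hf.2 z w)))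
            (mul_le_mul (hf.1 w) (hg.2 z w) dist_nonneg ((abs_nonneg _).trans (hf.1 w)))
      _ = (L * M' + M * L') * dist z w := by ring

end IsBoundedLipschitz

lemma isBoundedLipschitz_inv_projIcc {a b : ℝ} (ha : 0 < a) (hab : a ≤ b) :
    IsBoundedLipschitz (fun t => (projIcc a b hab t : ℝ)⁻¹) a⁻¹ (a⁻¹ * a⁻¹) := by
  have hle : ∀ t, a ≤ projIcc a b hab t := fun t => (projIcc a b hab t).2.1
  have hpos : ∀ t, 0 < (projIcc a b hab t : ℝ) := fun t => ha.trans_le (hle t)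
  have hinv : ∀ t, |(projIcc a b hab t : ℝ)⁻¹| ≤ a⁻¹ := fun t => by
    rw [abs_of_pos (inv_pos.mpr (hpos t))]
    exact inv_anti₀ ha (hle t)
  refine ⟨hinv, fun s t => ?_⟩
  calc dist (projIcc a b hab s : ℝ)⁻¹ (projIcc a b hab t : ℝ)⁻¹
      = |(projIcc a b hab s : ℝ)⁻¹| * |(projIcc a b hab t : ℝ) - projIcc a b hab s| *
          |(projIcc a b hab t : ℝ)⁻¹| := by
        rw [Real.dist_eq, inv_sub_inv' (hpos s).ne' (hpos t).ne', abs_mul, abs_mul]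
    _ ≤ a⁻¹ * dist s t * a⁻¹ := by
        refine mul_le_mul (mul_le_mul (hinv s) ?_ (abs_nonneg _) (by positivity)) (hinv t)
          (abs_nonneg _) (by positivity)
        rw [Real.dist_eq, abs_sub_comm s t]
        exact abs_projIcc_sub_projIcc hab
    _ = a⁻¹ * a⁻¹ * dist s t := by ring

lemma isBoundedLipschitz_projIcc_inner {E : Type*} [NormedAddCommGroup E] [InnerProductSpace ℝ E]
    {P : ℝ} (hP : -P ≤ P) {u : E} (hu : ‖u‖ ≤ 1) :
    IsBoundedLipschitz (fun v : E => (projIcc (-P) P hP ⟪v, u⟫_ℝ : ℝ)) P 1 := by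
  refine ⟨fun v => abs_le.mpr (projIcc (-P) P hP _).2, fun v w => ?_⟩
  calc dist (projIcc (-P) P hP ⟪v, u⟫_ℝ : ℝ) (projIcc (-P) P hP ⟪w, u⟫_ℝ)
      ≤ |⟪v, u⟫_ℝ - ⟪w, u⟫_ℝ| := abs_projIcc_sub_projIcc hP
    _ = |⟪v - w, u⟫_ℝ| := by rw [inner_sub_left]
    _ ≤ ‖v - w‖ * ‖u‖ := abs_real_inner_le_norm _ _
    _ ≤ 1 * dist v w := by
        rw [dist_eq_norm, one_mul]
        exact mul_le_of_le_one_right (norm_nonneg _) hu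

lemma isBoundedLipschitz_comp_sub_right {G : Type*} [SeminormedAddCommGroup G] {φ : G → ℝ}
    {M L : ℝ} (hM : ∀ y, |φ y| ≤ M) (hLnn : 0 ≤ L) (hL : LipschitzWith (Real.toNNReal L) φ)
    (x : G) : IsBoundedLipschitz (fun y => φ (y - x)) M L :=
  ⟨fun y => hM _, fun y y' => by
    simpa [dist_sub_right, Real.coe_toNNReal _ hLnn] using hL.dist_le_mul (y - x) (y' - x)⟩

lemma norm_inv_norm_smul_le {E : Type*} [NormedAddCommGroup E] [NormedSpace ℝ E] (w : E) :
    ‖‖w‖⁻¹ • w‖ ≤ 1 := by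
  rw [norm_smul, norm_inv, norm_norm]
  exact inv_mul_le_one_of_le₀ le_rfl (norm_nonneg w)

lemma norm_eq_inner_inv_norm_smul {E : Type*} [NormedAddCommGroup E] [InnerProductSpace ℝ E]
    (w : E) : ‖w‖ = ⟪w, ‖w‖⁻¹ • w⟫_ℝ := by
  rw [real_inner_smul_right, real_inner_self_eq_norm_sq]
  rcases eq_or_ne ‖w‖ 0 with h | h
  · simp [h]
  · field_simp

section BoundedLipschitzDistance

variable (μ ν : Measure (Xd d)) [IsFiniteMeasure μ] [IsFiniteMeasure ν]

lemma bddAbove_blDist_set :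
    BddAbove {r | ∃ g : Xd d → ℝ, (∀ z, |g z| ≤ 1) ∧ LipschitzWith 1 g ∧
      r = |(∫ z, g z ∂μ) - ∫ z, g z ∂ν|} := by
  refine ⟨μ.real univ + ν.real univ, ?_⟩
  rintro r ⟨g, hb, -, rfl⟩
  have hμ : ‖∫ z, g z ∂μ‖ ≤ 1 * μ.real univ := norm_integral_le_of_norm_le_const (.of_forall hb)
  have hν : ‖∫ z, g z ∂ν‖ ≤ 1 * ν.real univ := norm_integral_le_of_norm_le_const (.of_forall hb)
  rw [Real.norm_eq_abs, one_mul] at hμ hν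
  exact (abs_sub _ _).trans (add_le_add hμ hν)

lemma abs_integral_sub_le_blDist {g : Xd d → ℝ} (hb : ∀ z, |g z| ≤ 1) (hl : LipschitzWith 1 g) :
    |(∫ z, g z ∂μ) - ∫ z, g z ∂ν| ≤ blDist μ ν :=
  le_csSup (bddAbove_blDist_set μ ν) ⟨g, hb, hl, rfl⟩

lemma blDist_nonneg : 0 ≤ blDist μ ν := by
  simpa using abs_integral_sub_le_blDist μ ν (g := fun _ => 0) (by simp) (LipschitzWith.const' 0)

lemma IsBoundedLipschitz.abs_integral_sub_le_mul_blDist {g : Xd d → ℝ} {C : ℝ}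
    (hg : IsBoundedLipschitz g C C) : |(∫ z, g z ∂μ) - ∫ z, g z ∂ν| ≤ C * blDist μ ν := by
  rcases ((abs_nonneg _).trans (hg.1 0)).eq_or_lt with rfl | hC
  · have hzero : ∀ z, g z = 0 := fun z => abs_nonpos_iff.mp (hg.1 z)
    simp [hzero]
  · have hnormalized := hg.const_mul (inv_pos.mpr hC).le
    rw [inv_mul_cancel₀ hC.ne'] at hnormalized
    calc |(∫ z, g z ∂μ) - ∫ z, g z ∂ν|
        = C * |(∫ z, C⁻¹ * g z ∂μ) - ∫ z, C⁻¹ * g z ∂ν| := by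
          rw [integral_const_mul, integral_const_mul, ← mul_sub, abs_mul,
            abs_of_pos (inv_pos.mpr hC), ← mul_assoc, mul_inv_cancel₀ hC.ne', one_mul]
      _ ≤ C * blDist μ ν :=
          mul_le_mul_of_nonneg_left (abs_integral_sub_le_blDist μ ν hnormalized.1
            (.of_dist_le_mul fun z w => by simpa using hnormalized.2 z w)) hC.le

end BoundedLipschitzDistance

def clampedInnerAkerIntegrand (φ : Td d → ℝ) (x : Td d) (u : Vd d) {P θm θM : ℝ} (hP : -P ≤ P)
    (hθ : θm ≤ θM) (z : Xd d) : ℝ :=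
  φ (z.1 - x) * (projIcc θm θM hθ z.2.2 : ℝ)⁻¹ * projIcc (-P) P hP ⟪z.2.1, u⟫_ℝ

section ClampedIntegrand

variable {φ : Td d → ℝ} {Mφ P θm θM : ℝ} {u : Vd d}

lemma isBoundedLipschitz_clampedInnerAkerIntegrand (hP : -P ≤ P) (hθ : θm ≤ θM) (x : Td d)
    {Lφ : ℝ} (hM : ∀ y, |φ y| ≤ Mφ) (hLnn : 0 ≤ Lφ)
    (hL : LipschitzWith (Real.toNNReal Lφ) φ) (hθm : 0 < θm) (hu : ‖u‖ ≤ 1) :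
    IsBoundedLipschitz (clampedInnerAkerIntegrand φ x u hP hθ) (Mφ * θm⁻¹ * P)
      ((Lφ * θm⁻¹ + Mφ * (θm⁻¹ * θm⁻¹)) * P + Mφ * θm⁻¹ * 1) := by
  have hv : LipschitzWith 1 (fun z : Xd d => z.2.1) := by
    simpa [Function.comp_def] using LipschitzWith.prod_fst.comp LipschitzWith.prod_snd
  have hθz : LipschitzWith 1 (fun z : Xd d => z.2.2) := by
    simpa [Function.comp_def] using LipschitzWith.prod_snd.comp LipschitzWith.prod_snd
  exact (((isBoundedLipschitz_comp_sub_right hM hLnn hL x).comp hLnn LipschitzWith.prod_fst).mul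
    ((isBoundedLipschitz_inv_projIcc hθm hθ).comp (by positivity) hθz)).mul
    ((isBoundedLipschitz_projIcc_inner hP hu).comp zero_le_one hv)

lemma integrable_aker_integrand {κ : Measure (Xd d)} [IsFiniteMeasure κ] (hφ : Continuous φ)
    (hM : ∀ y, |φ y| ≤ Mφ) (hθm : 0 < θm) (hκ : SuppIn κ P θm θM) (x : Td d) :
    Integrable (fun z : Xd d => φ (z.1 - x) • ((z.2.2)⁻¹ • z.2.1)) κ := by
  have hmeas : Measurable fun z : Xd d => φ (z.1 - x) • ((z.2.2)⁻¹ • z.2.1) :=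
    (hφ.comp (continuous_fst.sub continuous_const)).measurable.smul
      (measurable_snd.snd.inv.smul measurable_snd.fst)
  refine .mono' (integrable_const (Mφ * (θm⁻¹ * P))) hmeas.aestronglyMeasurable ?_
  filter_upwards [ae_iff.mpr hκ] with z ⟨hv, hθz⟩
  have hθinv : |(z.2.2)⁻¹| ≤ θm⁻¹ := by
    rw [abs_of_pos (inv_pos.mpr (hθm.trans_le hθz.1))]
    exact inv_anti₀ hθm hθz.1
  rw [norm_smul, norm_smul, Real.norm_eq_abs, Real.norm_eq_abs]
  exact mul_le_mul (hM _) (mul_le_mul hθinv hv (norm_nonneg _) (by positivity))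
    (by positivity) ((abs_nonneg _).trans (hM 0))

lemma inner_aker_eq_integral_clampedInnerAkerIntegrand (hP : -P ≤ P) (hθ : θm ≤ θM)
    {κ : Measure (Xd d)} [IsFiniteMeasure κ] (hφ : Continuous φ) (hM : ∀ y, |φ y| ≤ Mφ)
    (hθm : 0 < θm) (hu : ‖u‖ ≤ 1) (hκ : SuppIn κ P θm θM) (x : Td d) :
    ⟪aker φ κ x, u⟫_ℝ = ∫ z, clampedInnerAkerIntegrand φ x u hP hθ z ∂κ := by
  rw [real_inner_comm, aker, ← integral_inner (integrable_aker_integrand hφ hM hθm hκ x)]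
  refine integral_congr_ae ?_
  filter_upwards [ae_iff.mpr hκ] with z ⟨hv, hθz⟩
  have hinner : ⟪z.2.1, u⟫_ℝ ∈ Icc (-P) P := abs_le.mp <|
    (abs_real_inner_le_norm _ _).trans (mul_le_of_le_one_right (norm_nonneg _) hu |>.trans hv)
  rw [clampedInnerAkerIntegrand, projIcc_of_mem hθ hθz, projIcc_of_mem hP hinner,
    real_inner_smul_right, real_inner_smul_right, real_inner_comm z.2.1 u]
  ring

end ClampedIntegrand

theorem aker_stability_general
    (d : ℕ) (φ : Td d → ℝ)
    (Mφ Lφ : ℝ) (hM : ∀ x, |φ x| ≤ Mφ) (hLnn : 0 ≤ Lφ)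
    (hL : LipschitzWith (Real.toNNReal Lφ) φ)
    (P θm θM : ℝ) (hP : 0 < P) (hθm : 0 < θm) (hθmM : θm ≤ θM)
    (μ ν : Measure (Xd d)) [IsFiniteMeasure μ] [IsFiniteMeasure ν]
    (hsμ : SuppIn μ P θm θM) (hsν : SuppIn ν P θm θM) :
    ∀ x : Td d,
      ‖aker φ μ x - aker φ ν x‖ ≤
        max (Mφ * P / θm) (Lφ * P / θm + Mφ / θm + Mφ * P / θm ^ 2) * blDist μ ν := by
  intro x
  set A := aker φ μ x - aker φ ν x
  have hP' : -P ≤ P := by linarith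
  have hu := norm_inv_norm_smul_le A
  set f := clampedInnerAkerIntegrand φ x (‖A‖⁻¹ • A) hP' hθmM
  set C := max (Mφ * P / θm) (Lφ * P / θm + Mφ / θm + Mφ * P / θm ^ 2)
  have hf : IsBoundedLipschitz f C C :=
    (isBoundedLipschitz_clampedInnerAkerIntegrand hP' hθmM x hM hLnn hL hθm hu).mono
      (le_max_of_le_left (le_of_eq (by ring)))
      (le_max_of_le_right (le_of_eq (by field_simp; ring)))
  have hφ := hL.continuous
  calc ‖A‖ = ⟪A, ‖A‖⁻¹ • A⟫_ℝ := norm_eq_inner_inv_norm_smul A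
    _ = (∫ z, f z ∂μ) - ∫ z, f z ∂ν := by
        rw [inner_sub_left,
          inner_aker_eq_integral_clampedInnerAkerIntegrand hP' hθmM hφ hM hθm hu hsμ,
          inner_aker_eq_integral_clampedInnerAkerIntegrand hP' hθmM hφ hM hθm hu hsν]
    _ ≤ |(∫ z, f z ∂μ) - ∫ z, f z ∂ν| := le_abs_self _
    _ ≤ _ := hf.abs_integral_sub_le_mul_blDist μ ν

/-- stability of `a(x,·)` with respect to the input measure in the
bounded Lipschitz distance, with the explicit constant
`max{‖φ‖_∞ P/θ_m, ‖φ‖_Lip P/θ_m + ‖φ‖_∞/θ_m + ‖φ‖_∞ P/θ_m²}`. -/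
theorem aker_stability
    (d : ℕ) (φ : Td d → ℝ) (hφ0 : ∀ x, 0 ≤ φ x)
    (Mφ Lφ : ℝ) (hM : ∀ x, |φ x| ≤ Mφ) (hLnn : 0 ≤ Lφ)
    (hL : LipschitzWith (Real.toNNReal Lφ) φ)
    (P θm θM : ℝ) (hP : 0 < P) (hθm : 0 < θm) (hθmM : θm ≤ θM)
    (μ ν : Measure (Xd d)) [IsFiniteMeasure μ] [IsFiniteMeasure ν]
    (hsμ : SuppIn μ P θm θM) (hsν : SuppIn ν P θm θM) :
    ∀ x : Td d,
      ‖aker φ μ x - aker φ ν x‖ ≤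
        max (Mφ * P / θm) (Lφ * P / θm + Mφ / θm + Mφ * P / θm ^ 2) * blDist μ ν :=
  aker_stability_general d φ Mφ Lφ hM hLnn hL P θm θM hP hθm hθmM μ ν hsμ hsν
end
end
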